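/- arXiv:2102.11465 — 2 statements merged into one kernel-verified Lean document; each statement's English description precedes it below -/
import Mathlib

section
/- Let θ > 1, ν₀, μ₀, ν ∈ (0,1), n ≥ 1 an integer, and η ∈ (0,1). Suppose μ : (0,1) → [0, μ₀] is a function satisfying: μ(q) ≥ μ₀ for q ∈ [q₀, 1), and for all 0 < q' < q'' < 1 with (1+θ)q' ≥ 2q'', μ(q') ≥ min(μ₀, ν₀ μ(q''), μ₀ ν ηⁿ (q'' - q')ⁿ). Then there exist γ ∈ (0,1) and N > 0, depending only on θ, ν₀, μ₀, ν, η, n, q₀, such that μ(q) ≥ N⁻¹ q^{1/γ} for all q ∈ (0,1). -/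
/-!
With `r = 2/(1+θ) < 1`, the hypothesis lets one pass from a lower bound for `μ` on
`[r^k q₀, 1)` to one on `[r^(k+1) q₀, 1)`, at the price of a factor `ρ = min(ν₀, rⁿ)`:
for `q` in the new range the partner point `q''` can be taken in the old range with
`q'' - q ≥ r^k δ`, `δ = min(q₀(1-r), 1-q₀)`, so the third term of the minimum is of
order `(r^k)ⁿ ≥ ρ^k`. Hence `μ ≥ c ρ^k` on `[r^k q₀, 1)`, and since `ρ^k = (r^k)^α`
with `α = log_r ρ`, this geometric decay is the power bound `μ(q) ≳ q^α`.
-/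

open Set Real

section Iteration

variable {μ : ℝ → ℝ} {r q₀ μ₀ ν₀ K δ : ℝ} {n : ℕ}

theorem iteration_step (hr0 : 0 < r) (hr1 : r ≤ 1) (hq₀0 : 0 < q₀) (hq₀1 : q₀ < 1)
    (hδ0 : 0 ≤ δ) (hδr : δ ≤ q₀ * (1 - r)) (hδq₀ : δ ≤ 1 - q₀) (hν₀ : 0 ≤ ν₀) (hK : 0 ≤ K)
    (hiter : ∀ q' q'', 0 < q' → q' < q'' → q'' < 1 → q'' * r ≤ q' →
      min (min μ₀ (ν₀ * μ q'')) (K * (q'' - q') ^ n) ≤ μ q')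
    {k : ℕ} {b : ℝ} (hb : ∀ q ∈ Ico (r ^ k * q₀) 1, b ≤ μ q)
    {q : ℝ} (hq : q ∈ Ico (r ^ (k + 1) * q₀) (r ^ k * q₀)) :
    min (min μ₀ (ν₀ * b)) (K * (r ^ k * δ) ^ n) ≤ μ q := by
  obtain ⟨hlo, hhi⟩ := hq
  have hrk0 : 0 < r ^ k := by positivity
  have hrk1 : r ^ k ≤ 1 := pow_le_one₀ hr0.le hr1
  have hq0 : 0 < q := lt_of_lt_of_le (by positivity) hlo
  rw [pow_succ] at hlo
  set q'' := max (r ^ k * q₀) (q + r ^ k * δ)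
  have hqq'' : q < q'' := hhi.trans_le (le_max_left _ _)
  have hq''1 : q'' < 1 := max_lt (by nlinarith) (by nlinarith)
  have hq''r : q'' * r ≤ q := by
    rw [max_mul_of_nonneg _ _ hr0.le]
    refine max_le (by linarith) ?_
    have : r ^ k * δ * r ≤ r ^ k * r * q₀ * (1 - r) := by
      nlinarith [mul_le_mul_of_nonneg_left hδr (mul_nonneg hrk0.le hr0.le)]
    nlinarith
  have hgap : r ^ k * δ ≤ q'' - q := by linarith [le_max_right (r ^ k * q₀) (q + r ^ k * δ)]
  calc min (min μ₀ (ν₀ * b)) (K * (r ^ k * δ) ^ n)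
      ≤ min (min μ₀ (ν₀ * μ q'')) (K * (q'' - q) ^ n) := by
        gcongr
        exact hb q'' ⟨le_max_left _ _, hq''1⟩
    _ ≤ μ q := hiter q q'' hq0 hqq'' hq''1 hq''r

theorem geometric_lower_bound (hr0 : 0 < r) (hr1 : r ≤ 1) (hq₀0 : 0 < q₀) (hq₀1 : q₀ < 1)
    (hδ0 : 0 ≤ δ) (hδr : δ ≤ q₀ * (1 - r)) (hδq₀ : δ ≤ 1 - q₀) (hν₀ : 0 ≤ ν₀) (hK : 0 ≤ K)
    {c ρ : ℝ} (hc0 : 0 ≤ c) (hcμ₀ : c ≤ μ₀) (hcK : c ≤ K * δ ^ n)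
    (hρ0 : 0 ≤ ρ) (hρν₀ : ρ ≤ ν₀) (hρr : ρ ≤ r ^ n)
    (hbig : ∀ q ∈ Ico q₀ 1, μ₀ ≤ μ q)
    (hiter : ∀ q' q'', 0 < q' → q' < q'' → q'' < 1 → q'' * r ≤ q' →
      min (min μ₀ (ν₀ * μ q'')) (K * (q'' - q') ^ n) ≤ μ q') (k : ℕ) :
    ∀ q ∈ Ico (r ^ k * q₀) 1, c * ρ ^ k ≤ μ q := by
  have hρ1 : ρ ≤ 1 := hρr.trans (pow_le_one₀ hr0.le hr1)
  induction k with
  | zero => simpa using fun q hq => hcμ₀.trans (hbig q hq)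
  | succ k ih =>
    intro q ⟨hlo, hhi⟩
    have hdecay : c * ρ ^ (k + 1) ≤ c * ρ ^ k :=
      mul_le_mul_of_nonneg_left (pow_le_pow_of_le_one hρ0 hρ1 k.le_succ) hc0
    rcases le_or_gt (r ^ k * q₀) q with hq | hq
    · exact hdecay.trans (ih q ⟨hq, hhi⟩)
    refine le_trans ?_ (iteration_step hr0 hr1 hq₀0 hq₀1 hδ0 hδr hδq₀ hν₀ hK hiter ih
      ⟨hlo, hq⟩)
    refine le_min (le_min ?_ ?_) ?_
    · calc c * ρ ^ (k + 1) ≤ c * 1 := by gcongr; exact pow_le_one₀ hρ0 hρ1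
        _ ≤ μ₀ := by rwa [mul_one]
    · calc c * ρ ^ (k + 1) = ρ * (c * ρ ^ k) := by ring
        _ ≤ ν₀ * (c * ρ ^ k) := by gcongr
    · calc c * ρ ^ (k + 1) ≤ c * ρ ^ k := hdecay
        _ ≤ K * δ ^ n * (r ^ n) ^ k := by gcongr
        _ = K * (r ^ k * δ) ^ n := by rw [mul_pow, ← pow_mul, ← pow_mul, mul_comm n k]; ring

end Iteration

theorem exists_rpow_le_of_geometric_lower_bound {f : ℝ → ℝ} {r q₀ c ρ : ℝ}
    (hr0 : 0 < r) (hr1 : r < 1) (hq₀ : 0 < q₀) (hc : 0 < c) (hρ0 : 0 < ρ) (hρ1 : ρ < 1)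
    (h : ∀ k : ℕ, ∀ q ∈ Ico (r ^ k * q₀) 1, c * ρ ^ k ≤ f q) :
    ∃ C > 0, ∃ α : ℝ, 0 < α ∧ ∀ q ∈ Ioo 0 1, C * q ^ α ≤ f q := by
  set α := logb r ρ
  have hα : 0 < α := logb_pos_of_base_lt_one hr0 hr1 hρ0 hρ1
  have hrα : r ^ α = ρ := rpow_logb hr0 hr1.ne hρ0
  refine ⟨c * min 1 ((r / q₀) ^ α), by positivity, α, hα, fun q ⟨hq0, hq1⟩ => ?_⟩
  rcases le_or_gt q₀ q with hq | hq
  · calc c * min 1 ((r / q₀) ^ α) * q ^ α ≤ c * 1 * 1 := by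
          gcongr
          exacts [min_le_left _ _, rpow_le_one hq0.le hq1.le hα.le]
      _ = c * ρ ^ 0 := by simp
      _ ≤ f q := h 0 q ⟨by simpa using hq, hq1⟩
  · obtain ⟨m, hm1, hm2⟩ := exists_nat_pow_near_of_lt_one (div_pos hq0 hq₀)
      ((div_lt_one hq₀).2 hq).le hr0 hr1
    have hlevel : r ^ (m + 1) * q₀ ≤ q := by rw [← le_div_iff₀ hq₀]; exact hm1.le
    have hscale : r * q / q₀ ≤ r ^ (m + 1) := by
      rw [pow_succ', mul_div_assoc]; exact mul_le_mul_of_nonneg_left hm2 hr0.le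
    calc c * min 1 ((r / q₀) ^ α) * q ^ α ≤ c * ((r / q₀) ^ α * q ^ α) := by
          rw [mul_assoc]; gcongr; exact min_le_right _ _
      _ = c * (r * q / q₀) ^ α := by
          rw [← mul_rpow (by positivity) hq0.le, div_mul_eq_mul_div]
      _ ≤ c * (r ^ (m + 1)) ^ α := by gcongr
      _ = c * ρ ^ (m + 1) := by rw [← rpow_pow_comm hr0.le, hrα]
      _ ≤ f q := h (m + 1) q ⟨hlevel, hq1⟩

theorem stmt_11_general (θ : ℝ) (hθ : 1 < θ) (ν₀ μ₀ ν η : ℝ)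
    (hν₀ : ν₀ ∈ Set.Ioo (0 : ℝ) 1) (hμ₀ : μ₀ ∈ Set.Ioo (0 : ℝ) 1)
    (hν : ν ∈ Set.Ioo (0 : ℝ) 1) (hη : η ∈ Set.Ioo (0 : ℝ) 1)
    (n : ℕ) (q₀ : ℝ) (hq₀ : q₀ ∈ Set.Ioo (0 : ℝ) 1)
    (μ : ℝ → ℝ)
    (hbig : ∀ q ∈ Set.Ico q₀ (1 : ℝ), μ₀ ≤ μ q)
    (hiter : ∀ q' q'' : ℝ, 0 < q' → q' < q'' → q'' < 1 → (1 + θ) * q' ≥ 2 * q'' →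
      μ q' ≥ min (min μ₀ (ν₀ * μ q'')) (μ₀ * ν * η ^ n * (q'' - q') ^ n)) :
    ∃ γ ∈ Set.Ioo (0 : ℝ) 1, ∃ N : ℝ, 0 < N ∧
      ∀ q ∈ Set.Ioo (0 : ℝ) 1, μ q ≥ N⁻¹ * q ^ (1 / γ) := by
  set r := 2 / (1 + θ)
  have hr0 : 0 < r := by positivity
  have hr1 : r < 1 := by rw [div_lt_one (by linarith)]; linarith
  have hstep : ∀ q' q'', 0 < q' → q' < q'' → q'' < 1 → q'' * r ≤ q' →
      min (min μ₀ (ν₀ * μ q'')) (μ₀ * ν * η ^ n * (q'' - q') ^ n) ≤ μ q' := by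
    refine fun q' q'' h0 hlt h1 hr => hiter q' q'' h0 hlt h1 ?_
    rw [mul_div_assoc', div_le_iff₀ (by linarith)] at hr
    linarith
  set δ := min (q₀ * (1 - r)) (1 - q₀)
  have hδ0 : 0 < δ := lt_min (mul_pos hq₀.1 (by linarith)) (by linarith [hq₀.2])
  have hK : 0 < μ₀ * ν * η ^ n := by have := hμ₀.1; have := hν.1; have := hη.1; positivity
  set c := min μ₀ (μ₀ * ν * η ^ n * δ ^ n)
  set ρ := min ν₀ (r ^ n)
  have hc : 0 < c := lt_min hμ₀.1 (by positivity)
  have hρ : 0 < ρ := lt_min hν₀.1 (by positivity)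
  have hlevels := geometric_lower_bound hr0 hr1.le hq₀.1 hq₀.2 hδ0.le (min_le_left _ _)
    (min_le_right _ _) hν₀.1.le hK.le hc.le (min_le_left _ _) (min_le_right _ _) hρ.le
    (min_le_left _ _) (min_le_right _ _) hbig hstep
  obtain ⟨C, hC, α, hα, hpow⟩ := exists_rpow_le_of_geometric_lower_bound hr0 hr1 hq₀.1 hc hρ
    ((min_le_left _ _).trans_lt hν₀.2) hlevels
  refine ⟨1 / (α + 1), ⟨by positivity, (div_lt_one (by linarith)).2 (by linarith)⟩,
    C⁻¹, inv_pos.2 hC, fun q hq => ?_⟩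
  rw [inv_inv, one_div_one_div]
  calc C * q ^ (α + 1) ≤ C * q ^ α :=
        mul_le_mul_of_nonneg_left (rpow_le_rpow_of_exponent_ge hq.1 hq.2.le (by linarith)) hC.le
    _ ≤ μ q := hpow q hq

/-- Abstract iteration scheme (3.11): if `μ(q) ≥ μ₀` for `q ∈ [q₀,1)` and
`μ(q') ≥ min(μ₀, ν₀ μ(q''), μ₀ ν ηⁿ (q''-q')ⁿ)` whenever `(1+θ)q' ≥ 2q''`,
then `μ(q) ≥ N⁻¹ q^{1/γ}` on `(0,1)` for some `γ ∈ (0,1)`, `N > 0` depending only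
on `θ, ν₀, μ₀, ν, η, n, q₀`. -/
theorem stmt_11 (θ : ℝ) (hθ : 1 < θ) (ν₀ μ₀ ν η : ℝ)
    (hν₀ : ν₀ ∈ Set.Ioo (0 : ℝ) 1) (hμ₀ : μ₀ ∈ Set.Ioo (0 : ℝ) 1)
    (hν : ν ∈ Set.Ioo (0 : ℝ) 1) (hη : η ∈ Set.Ioo (0 : ℝ) 1)
    (n : ℕ) (hn : 1 ≤ n) (q₀ : ℝ) (hq₀ : q₀ ∈ Set.Ioo (0 : ℝ) 1)
    (μ : ℝ → ℝ)
    (hrange : ∀ q ∈ Set.Ioo (0 : ℝ) 1, μ q ∈ Set.Icc (0 : ℝ) μ₀)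
    (hbig : ∀ q ∈ Set.Ico q₀ (1 : ℝ), μ₀ ≤ μ q)
    (hiter : ∀ q' q'' : ℝ, 0 < q' → q' < q'' → q'' < 1 → (1 + θ) * q' ≥ 2 * q'' →
      μ q' ≥ min (min μ₀ (ν₀ * μ q'')) (μ₀ * ν * η ^ n * (q'' - q') ^ n)) :
    ∃ γ ∈ Set.Ioo (0 : ℝ) 1, ∃ N : ℝ, 0 < N ∧
      ∀ q ∈ Set.Ioo (0 : ℝ) 1, μ q ≥ N⁻¹ * q ^ (1 / γ) :=
  stmt_11_general θ hθ ν₀ μ₀ ν η hν₀ hμ₀ hν hη n q₀ hq₀ μ hbig hiter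
end

section
/- Let μ > 0. Suppose G is a nonnegative measure-like functional on Borel subsets Γ of a cylinder C of finite Lebesgue measure |C|, satisfying: G(Γ) ≥ N₁⁻¹ (|Γ|/|C|)^μ R² whenever |Γ| > 0 (for constants N₁, R > 0), and G(Γ) = ∫_Γ g dλ for some nonnegative measurable density g with respect to Lebesgue measure λ. Then for any Borel nonnegative f vanishing outside C, ∫_C f^{1/(2μ)} dλ ≤ N |C| (R^{-2} ∫_C f g dλ)^{1/(2μ)} for a constant N depending only on μ and N₁. -/
/-!
By Chebyshev's inequality for the measure `g dλ`, the lower bound on `G` turns into the weak-type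
estimate `(|C ∩ {f > s}| / |C|)^μ s ≤ K := N₁ R⁻² ∫_C f g`. For `h = f^{1/(2μ)}` this reads
`|C ∩ {h > t}| ≤ |C| (T/t)²` with `T = K^{1/(2μ)}`, and by the layer-cake formula
`∫_C h ≤ ∫₀^∞ min(|C|, |C| (T/t)²) dt = 2 |C| T`. The real-valued layer-cake formula applies
because the lower bound on `G` also forces `f < ∞` a.e. on `C` once `∫_C f g < ∞`.
-/

open MeasureTheory Set
open scoped ENNReal

theorem lintegral_Ioi_ofReal_div_rpow {T p : ℝ} (hT : 0 ≤ T) (hp : 1 < p) :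
    ∫⁻ t in Ioi T, ENNReal.ofReal ((T / t) ^ p) = ENNReal.ofReal (T / (p - 1)) := by
  rcases hT.eq_or_lt with rfl | hT
  · simp [Real.zero_rpow (by linarith : p ≠ 0)]
  have hint : IntegrableOn (fun t : ℝ => T ^ p * t ^ (-p)) (Ioi T) :=
    (integrableOn_Ioi_rpow_of_lt (by linarith) hT).const_mul _
  have hnn : 0 ≤ᵐ[volume.restrict (Ioi T)] fun t : ℝ => T ^ p * t ^ (-p) :=
    ae_restrict_of_forall_mem measurableSet_Ioi fun t ht => by
      have := Real.rpow_nonneg (hT.trans ht).le (-p)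
      positivity
  calc ∫⁻ t in Ioi T, ENNReal.ofReal ((T / t) ^ p)
      = ∫⁻ t in Ioi T, ENNReal.ofReal (T ^ p * t ^ (-p)) := by
        refine setLIntegral_congr_fun measurableSet_Ioi fun t ht => ?_
        rw [Real.div_rpow hT.le (hT.trans ht).le, Real.rpow_neg (hT.trans ht).le, div_eq_mul_inv]
    _ = ENNReal.ofReal (∫ t in Ioi T, T ^ p * t ^ (-p)) :=
        (ofReal_integral_eq_lintegral_ofReal hint hnn).symm
    _ = ENNReal.ofReal (T / (p - 1)) := by
        rw [integral_const_mul, integral_Ioi_rpow_of_lt (by linarith) hT, mul_div_assoc',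
          mul_neg, ← Real.rpow_add hT, add_neg_cancel_left, Real.rpow_one,
          show -p + 1 = -(p - 1) by ring, div_neg, neg_div, neg_neg]

theorem lintegral_ofReal_le_of_meas_lt_le {α : Type*} [MeasurableSpace α] {ν : Measure α}
    {h : α → ℝ} (h_nn : 0 ≤ᵐ[ν] h) (h_mble : AEMeasurable h ν) {T p : ℝ} (hT : 0 ≤ T)
    (hp : 1 < p) (hlevel : ∀ t, 0 < t → ν {x | t < h x} ≤ ν univ * ENNReal.ofReal ((T / t) ^ p)) :
    ∫⁻ x, ENNReal.ofReal (h x) ∂ν ≤ ν univ * ENNReal.ofReal (p / (p - 1) * T) := by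
  have hmeas : Measurable fun t : ℝ => ENNReal.ofReal ((T / t) ^ p) := by fun_prop
  rw [lintegral_eq_lintegral_meas_lt ν h_nn h_mble, ← Ioc_union_Ioi_eq_Ioi hT,
    lintegral_union measurableSet_Ioi (Ioc_disjoint_Ioi le_rfl)]
  calc (∫⁻ t in Ioc 0 T, ν {x | t < h x}) + ∫⁻ t in Ioi T, ν {x | t < h x}
      ≤ (∫⁻ _ in Ioc 0 T, ν univ) + ∫⁻ t in Ioi T, ν univ * ENNReal.ofReal ((T / t) ^ p) :=
        add_le_add (lintegral_mono fun t => measure_mono (subset_univ _))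
          (setLIntegral_mono' measurableSet_Ioi fun t ht => hlevel t (hT.trans_lt ht))
    _ = ν univ * ENNReal.ofReal T + ν univ * ENNReal.ofReal (T / (p - 1)) := by
        rw [setLIntegral_const, Real.volume_Ioc, sub_zero, lintegral_const_mul _ hmeas,
          lintegral_Ioi_ofReal_div_rpow hT hp]
    _ = ν univ * ENNReal.ofReal (p / (p - 1) * T) := by
        have hp1 : 0 < p - 1 := by linarith
        rw [← mul_add, ← ENNReal.ofReal_add hT (by positivity)]
        congr 2
        field_simp
        ring

theorem le_rpow_div_sq_of_rpow_mul_rpow_le {x t μ K : ℝ} (hx : 0 ≤ x) (ht : 0 < t) (hμ : 0 < μ)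
    (hK : 0 ≤ K) (h : x ^ μ * t ^ (2 * μ) ≤ K) : x ≤ (K ^ (1 / (2 * μ)) / t) ^ (2 : ℝ) := by
  have hK' : (K ^ (1 / (2 * μ)) / t) ^ (2 : ℝ) = K ^ μ⁻¹ / t ^ 2 := by
    rw [Real.div_rpow (by positivity) ht.le, ← Real.rpow_mul hK, Real.rpow_two]
    congr 2
    field_simp
  have hxt : x * t ^ 2 ≤ K ^ μ⁻¹ := by
    rw [← Real.rpow_le_rpow_iff (by positivity) (by positivity) hμ, Real.rpow_inv_rpow hK hμ.ne',
      Real.mul_rpow hx (by positivity), ← Real.rpow_natCast, ← Real.rpow_mul ht.le]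
    simpa [mul_comm] using h
  rw [hK', le_div_iff₀ (by positivity)]
  exact hxt

section PowerLowerBound

variable {α : Type*} [MeasurableSpace α] {lam : Measure α} {C : Set α} {g f : α → ℝ≥0∞}
  {μ N₁ R : ℝ}

def HasPowerLowerBound (lam : Measure α) (C : Set α) (g : α → ℝ≥0∞) (μ N₁ R : ℝ) : Prop :=
  ∀ Γ : Set α, MeasurableSet Γ → Γ ⊆ C → 0 < lam Γ →
    ENNReal.ofReal (N₁⁻¹ * ((lam Γ).toReal / (lam C).toReal) ^ μ * R ^ 2) ≤ ∫⁻ x in Γ, g x ∂lam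

theorem HasPowerLowerBound.setLIntegral_pos (hlow : HasPowerLowerBound lam C g μ N₁ R)
    (hCtop : lam C ≠ ⊤) (hN₁ : 0 < N₁) (hR : 0 < R) {Γ : Set α} (hΓ : MeasurableSet Γ)
    (hΓC : Γ ⊆ C) (hΓ0 : 0 < lam Γ) : 0 < ∫⁻ x in Γ, g x ∂lam := by
  refine lt_of_lt_of_le ?_ (hlow Γ hΓ hΓC hΓ0)
  have hΓpos : 0 < (lam Γ).toReal := ENNReal.toReal_pos hΓ0.ne' (measure_ne_top_of_subset hΓC hCtop)
  have hCpos : 0 < (lam C).toReal := hΓpos.trans_le (ENNReal.toReal_mono hCtop (measure_mono hΓC))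
  rw [ENNReal.ofReal_pos]
  positivity

theorem ae_restrict_ne_top_of_setLIntegral_mul_ne_top (hC : MeasurableSet C) (hf : Measurable f)
    (hg : Measurable g)
    (hpos : ∀ Γ, MeasurableSet Γ → Γ ⊆ C → 0 < lam Γ → 0 < ∫⁻ x in Γ, g x ∂lam)
    (hI : ∫⁻ x in C, f x * g x ∂lam ≠ ⊤) : ∀ᵐ x ∂lam.restrict C, f x ≠ ⊤ := by
  set Γ := C ∩ f ⁻¹' {⊤}
  have hΓ : MeasurableSet Γ := hC.inter (hf (measurableSet_singleton ⊤))
  suffices lam Γ = 0 by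
    rw [ae_restrict_iff' hC, ae_iff]
    refine measure_mono_null (fun x hx => ?_) this
    by_contra hxΓ
    exact hx fun hxC hfx => hxΓ ⟨hxC, hfx⟩
  by_contra hΓ0
  have htop : ∫⁻ x in Γ, f x * g x ∂lam = ⊤ := by
    rw [setLIntegral_congr_fun hΓ fun x hx => by rw [hx.2], lintegral_const_mul _ hg,
      ENNReal.top_mul (hpos Γ hΓ inter_subset_left (pos_iff_ne_zero.mpr hΓ0)).ne']
  exact hI (top_le_iff.mp (htop ▸ lintegral_mono_set inter_subset_left))

theorem mul_setLIntegral_inter_lt_le (hf : Measurable f) (hg : Measurable g) (s : ℝ≥0∞) :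
    s * ∫⁻ x in C ∩ {x | s < f x}, g x ∂lam ≤ ∫⁻ x in C, f x * g x ∂lam := by
  rw [← lintegral_const_mul _ hg]
  calc ∫⁻ x in C ∩ {x | s < f x}, s * g x ∂lam
      ≤ ∫⁻ x in C ∩ {x | s < f x}, f x * g x ∂lam :=
        setLIntegral_mono (hf.mul hg) fun x hx => mul_le_mul_left hx.2.le _
    _ ≤ ∫⁻ x in C, f x * g x ∂lam := lintegral_mono_set inter_subset_left

theorem HasPowerLowerBound.rpow_measure_inter_lt_mul_le (hlow : HasPowerLowerBound lam C g μ N₁ R)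
    (hμ : 0 < μ) (hN₁ : 0 < N₁) (hR : 0 < R) (hC : MeasurableSet C) (hf : Measurable f)
    (hg : Measurable g) (hI : ∫⁻ x in C, f x * g x ∂lam ≠ ⊤) {s : ℝ} (hs : 0 < s) :
    ((lam (C ∩ {x | ENNReal.ofReal s < f x})).toReal / (lam C).toReal) ^ μ * s ≤
      N₁ * ((R ^ 2)⁻¹ * (∫⁻ x in C, f x * g x ∂lam).toReal) := by
  set Γ := C ∩ {x | ENNReal.ofReal s < f x}
  set X := (lam Γ).toReal / (lam C).toReal
  rcases eq_zero_or_pos (lam Γ) with hΓ0 | hΓ0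
  · rw [show X = 0 by simp [X, hΓ0], Real.zero_rpow hμ.ne', zero_mul]
    positivity
  have hΓ : MeasurableSet Γ := hC.inter (measurableSet_lt measurable_const hf)
  have hL : ENNReal.ofReal (N₁⁻¹ * X ^ μ * R ^ 2 * s) ≤ ∫⁻ x in C, f x * g x ∂lam :=
    calc ENNReal.ofReal (N₁⁻¹ * X ^ μ * R ^ 2 * s)
        = ENNReal.ofReal s * ENNReal.ofReal (N₁⁻¹ * X ^ μ * R ^ 2) := by
          rw [mul_comm, ENNReal.ofReal_mul hs.le]
      _ ≤ ENNReal.ofReal s * ∫⁻ x in Γ, g x ∂lam := by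
          gcongr
          exact hlow Γ hΓ inter_subset_left hΓ0
      _ ≤ ∫⁻ x in C, f x * g x ∂lam := mul_setLIntegral_inter_lt_le hf hg _
  calc X ^ μ * s = N₁ * ((R ^ 2)⁻¹ * (N₁⁻¹ * X ^ μ * R ^ 2 * s)) := by field_simp
    _ ≤ N₁ * ((R ^ 2)⁻¹ * (∫⁻ x in C, f x * g x ∂lam).toReal) := by
        gcongr
        exact (ENNReal.ofReal_le_iff_le_toReal hI).mp hL

end PowerLowerBound

theorem measure_restrict_lt_toReal_rpow_le {α : Type*} [MeasurableSpace α] {lam : Measure α}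
    {C : Set α} {f : α → ℝ≥0∞} {μ K : ℝ} (hC : MeasurableSet C) (hC0 : lam C ≠ 0)
    (hCtop : lam C ≠ ⊤) (hμ : 0 < μ)
    (hlevel : ∀ s, 0 < s →
      ((lam (C ∩ {x | ENNReal.ofReal s < f x})).toReal / (lam C).toReal) ^ μ * s ≤ K)
    {t : ℝ} (ht : 0 < t) :
    lam.restrict C {x | t < (f x ^ (1 / (2 * μ))).toReal} ≤
      lam.restrict C univ * ENNReal.ofReal ((K ^ (1 / (2 * μ)) / t) ^ (2 : ℝ)) := by
  have hK : 0 ≤ K := (by positivity : (0 : ℝ) ≤ _).trans (hlevel 1 one_pos)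
  set Γ := C ∩ {x | ENNReal.ofReal (t ^ (2 * μ)) < f x}
  have hsub : {x | t < (f x ^ (1 / (2 * μ))).toReal} ∩ C ⊆ Γ := by
    rintro x ⟨hx, hxC⟩
    refine ⟨hxC, ?_⟩
    have : ENNReal.ofReal t < f x ^ (2 * μ)⁻¹ := by
      rw [← one_div]
      exact ((ENNReal.ofReal_lt_ofReal_iff (ht.trans hx)).mpr hx).trans_le ENNReal.ofReal_toReal_le
    rwa [ENNReal.lt_rpow_inv_iff (by positivity), ENNReal.ofReal_rpow_of_pos ht] at this
  have hCpos : 0 < (lam C).toReal := ENNReal.toReal_pos hC0 hCtop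
  have hΓ : (lam Γ).toReal ≤ (lam C).toReal * (K ^ (1 / (2 * μ)) / t) ^ (2 : ℝ) :=
    (div_le_iff₀' hCpos).mp (le_rpow_div_sq_of_rpow_mul_rpow_le (by positivity) ht hμ hK
      (hlevel _ (by positivity)))
  rw [Measure.restrict_apply' hC, Measure.restrict_apply_univ]
  calc lam ({x | t < (f x ^ (1 / (2 * μ))).toReal} ∩ C) ≤ lam Γ := measure_mono hsub
    _ = ENNReal.ofReal (lam Γ).toReal :=
        (ENNReal.ofReal_toReal (measure_ne_top_of_subset inter_subset_left hCtop)).symm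
    _ ≤ _ := by
        rw [← ENNReal.ofReal_toReal hCtop, ← ENNReal.ofReal_mul hCpos.le]
        exact ENNReal.ofReal_le_ofReal hΓ

/-- Abstract layer-cake form of Corollary 3.7: if `G(Γ) = ∫_Γ g` satisfies the
power lower bound `G(Γ) ≥ N₁⁻¹ (|Γ|/|C|)^μ R²` for measurable `Γ ⊆ C` of positive
measure, then for every nonnegative `f` vanishing outside `C`,
`∫_C f^{1/(2μ)} ≤ N |C| (R⁻² ∫_C f g)^{1/(2μ)}` with `N` depending only on `μ, N₁`. -/
theorem stmt_12 (μ N₁ : ℝ) (hμ : 0 < μ) (hN₁ : 0 < N₁) :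
    ∃ N : ℝ, 0 < N ∧
      ∀ (α : Type) (_ : MeasurableSpace α) (lam : Measure α) (C : Set α)
        (_ : MeasurableSet C) (_ : 0 < lam C) (_ : lam C < ⊤)
        (R : ℝ) (_ : 0 < R) (g : α → ℝ≥0∞) (_ : Measurable g)
        (_ : ∀ Γ : Set α, MeasurableSet Γ → Γ ⊆ C → 0 < lam Γ →
          ENNReal.ofReal (N₁⁻¹ * ((lam Γ).toReal / (lam C).toReal) ^ μ * R ^ 2)
            ≤ ∫⁻ x in Γ, g x ∂lam)
        (f : α → ℝ≥0∞) (_ : Measurable f) (_ : ∀ x ∉ C, f x = 0),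
        ∫⁻ x in C, f x ^ (1 / (2 * μ)) ∂lam
          ≤ ENNReal.ofReal N * lam C *
            (ENNReal.ofReal (R ^ 2)⁻¹ * ∫⁻ x in C, f x * g x ∂lam) ^ (1 / (2 * μ)) := by
  refine ⟨2 * N₁ ^ (1 / (2 * μ)), by positivity, ?_⟩
  intro α _ lam C hC hC0 hCtop R hR g hg hlow f hf _
  set I := ∫⁻ x in C, f x * g x ∂lam
  rcases eq_or_ne I ⊤ with hI | hI
  · have hN : ENNReal.ofReal (2 * N₁ ^ (1 / (2 * μ))) ≠ 0 := by positivity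
    have hR2 : ENNReal.ofReal (R ^ 2)⁻¹ ≠ 0 := by positivity
    rw [hI, ENNReal.mul_top hR2, ENNReal.top_rpow_of_pos (by positivity),
      ENNReal.mul_top (mul_ne_zero hN hC0.ne')]
    exact le_top
  set K := N₁ * ((R ^ 2)⁻¹ * I.toReal)
  have hfin : ∀ᵐ x ∂lam.restrict C, f x ≠ ⊤ :=
    ae_restrict_ne_top_of_setLIntegral_mul_ne_top hC hf hg
      (fun _ hΓ hΓC hΓ0 => HasPowerLowerBound.setLIntegral_pos hlow hCtop.ne hN₁ hR hΓ hΓC hΓ0) hI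
  have hweak := lintegral_ofReal_le_of_meas_lt_le (ν := lam.restrict C)
    (ae_of_all _ fun x => ENNReal.toReal_nonneg) (hf.pow_const _).ennreal_toReal.aemeasurable
    (by positivity) one_lt_two
    fun t ht => measure_restrict_lt_toReal_rpow_le hC hC0.ne' hCtop.ne hμ
      (fun s hs => HasPowerLowerBound.rpow_measure_inter_lt_mul_le hlow hμ hN₁ hR hC hf hg hI hs) ht
  calc ∫⁻ x in C, f x ^ (1 / (2 * μ)) ∂lam
      = ∫⁻ x in C, ENNReal.ofReal (f x ^ (1 / (2 * μ))).toReal ∂lam :=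
        lintegral_congr_ae (hfin.mono fun x hx =>
          (ENNReal.ofReal_toReal (ENNReal.rpow_ne_top_of_nonneg (by positivity) hx)).symm)
    _ ≤ lam C * ENNReal.ofReal (2 / (2 - 1) * K ^ (1 / (2 * μ))) := by
        simpa only [Measure.restrict_apply_univ] using hweak
    _ = ENNReal.ofReal (2 * N₁ ^ (1 / (2 * μ))) * lam C *
          (ENNReal.ofReal (R ^ 2)⁻¹ * I) ^ (1 / (2 * μ)) := by
        rw [← ENNReal.ofReal_toReal hI, ← ENNReal.ofReal_mul (by positivity),
          ENNReal.ofReal_rpow_of_nonneg (by positivity) (by positivity), mul_right_comm,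
          ← ENNReal.ofReal_mul (by positivity), Real.mul_rpow hN₁.le (by positivity)]
        norm_num [mul_assoc, mul_comm]
end
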